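/- Suppose E ⊂ K ⊂ ℝ² with E and K bounded open convex sets, and let x, y ∈ E be distinct points on a common chord such that the chord of E through x, y has endpoints a, b and the chord of K through x, y has endpoints a', b' with a' = a (the left endpoints coincide) but |b' − x| > |b − x| (K extends strictly beyond E on the b side). Then the Hilbert midpoint of x and y in K is strictly different from (indeed strictly closer to x than) the Hilbert midpoint of x and y in E. -/

import Mathlib

open scoped Classical

/-- The Hilbert distance of a set `K ⊆ ℝⁿ` at `x, y`: parametrizing the line through
`x, y` as `t ↦ x + t•(y−x)` (so `x` at `t = 0`, `y` at `t = 1`), the boundary points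
are `a` at `S = sInf {t | x + t•(y−x) ∈ K}` and `b` at `T = sSup {t | x + t•(y−x) ∈ K}`,
and `d_K(x,y) = (1/2)·log((|y−a|/|x−a|)·(|x−b|/|y−b|))
             = (1/2)·log(((1−S)/(−S))·(T/(T−1)))`. -/
noncomputable def hilbertDist {n : ℕ} (K : Set (EuclideanSpace ℝ (Fin n)))
    (x y : EuclideanSpace ℝ (Fin n)) : ℝ :=
  if x = y then 0
  else
    (1 / 2) * Real.log
      (((1 - sInf {t : ℝ | x + t • (y - x) ∈ K}) / (0 - sInf {t : ℝ | x + t • (y - x) ∈ K})) *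
        (sSup {t : ℝ | x + t • (y - x) ∈ K} / (sSup {t : ℝ | x + t • (y - x) ∈ K} - 1)))
/-!
Parametrize the common line by `t ↦ x + t • (y - x)`; both chords start at the parameter `S < 0`
of `a` and end at parameters `T_E < T_K`. The coordinate change `t ↦ (t - S)⁻¹` sends `a` to
infinity and turns a chord into a half-line `(τ, ∞)`, on which the Hilbert midpoint of `p, q` is
`τ + √((p - τ) (q - τ))`. Passing from `E` to `K` moves `τ` left by some `δ > 0`, and by AM-GM
`√((p - τ + δ) (q - τ + δ)) > √((p - τ) (q - τ)) + δ`: the midpoint moves right in the new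
coordinate, that is, towards `x` on the chord.
-/
open Set AffineMap

theorem halfLine_hilbertMidpoint_lt {p q τ₁ τ₂ m₁ m₂ : ℝ} (hqp : q < p) (hτ : τ₂ < τ₁)
    (hτ₁ : τ₁ < q) (hm₂ : τ₂ < m₂)
    (h₁ : (m₁ - τ₁) ^ 2 = (p - τ₁) * (q - τ₁)) (h₂ : (m₂ - τ₂) ^ 2 = (p - τ₂) * (q - τ₂)) :
    m₁ < m₂ := by
  have hamgm : 2 * (m₁ - τ₁) < (p - τ₁) + (q - τ₁) := by
    nlinarith [sq_pos_of_pos (sub_pos.2 hqp)]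
  have hsq : (m₁ - τ₂) ^ 2 < (m₂ - τ₂) ^ 2 := by nlinarith
  nlinarith

theorem hilbertMidpoint_param_lt {S T₁ T₂ s₁ s₂ : ℝ} (hS : S < 0) (hT₁ : 1 < T₁) (hT : T₁ < T₂)
    (hs₁ : s₁ ∈ Ioo 0 1) (hs₂ : s₂ ∈ Ioo 0 1)
    (h₁ : ((s₁ - S)⁻¹ - (T₁ - S)⁻¹) ^ 2 = ((-S)⁻¹ - (T₁ - S)⁻¹) * ((1 - S)⁻¹ - (T₁ - S)⁻¹))
    (h₂ : ((s₂ - S)⁻¹ - (T₂ - S)⁻¹) ^ 2 = ((-S)⁻¹ - (T₂ - S)⁻¹) * ((1 - S)⁻¹ - (T₂ - S)⁻¹)) :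
    s₂ < s₁ := by
  obtain ⟨hs₁0, hs₁1⟩ := hs₁
  obtain ⟨hs₂0, hs₂1⟩ := hs₂
  have hinv : (s₁ - S)⁻¹ < (s₂ - S)⁻¹ := by
    refine halfLine_hilbertMidpoint_lt ?_ ?_ ?_ ?_ h₁ h₂ <;>
      apply inv_strictAnti₀ <;> linarith
  have := (inv_lt_inv₀ (by linarith) (by linarith)).1 hinv
  linarith

section Sbtw

variable {k V P : Type*} [Field k] [LinearOrder k] [IsStrictOrderedRing k] [AddCommGroup V]
  [Module k V] [AddTorsor V P]

theorem Sbtw.exists_one_lt_eq_lineMap {x y b : P} (h : Sbtw k x y b) :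
    ∃ t : k, 1 < t ∧ b = lineMap x y t := by
  obtain ⟨σ, ⟨hσ0, hσ1⟩, rfl⟩ := h.mem_image_Ioo
  refine ⟨σ⁻¹, one_lt_inv_iff₀.2 ⟨hσ0, hσ1⟩, ?_⟩
  rw [lineMap_lineMap_right, inv_mul_cancel₀ hσ0.ne', lineMap_apply_one]

theorem Sbtw.exists_neg_eq_lineMap {a x y : P} (h : Sbtw k a x y) :
    ∃ t : k, t < 0 ∧ a = lineMap x y t := by
  obtain ⟨t, ht, rfl⟩ := h.symm.exists_one_lt_eq_lineMap
  exact ⟨1 - t, sub_neg.2 ht, (lineMap_apply_one_sub x y t).symm⟩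

end Sbtw

theorem Convex.preimage_lineMap_eq_Ioo {V : Type*} [NormedAddCommGroup V] [NormedSpace ℝ V]
    {C : Set V} (hC : Convex ℝ C) (hCo : IsOpen C) {x y : V} (hx : x ∈ C) (hy : y ∈ C)
    {S T : ℝ} (hS : S < 0) (hT : 1 < T)
    (ha : lineMap x y S ∈ closure C \ C) (hb : lineMap x y T ∈ closure C \ C) :
    lineMap x y ⁻¹' C = Ioo S T := by
  have h0 : (0 : ℝ) ∈ lineMap x y ⁻¹' C := by simpa using hx
  have h1 : (1 : ℝ) ∈ lineMap x y ⁻¹' C := by simpa using hy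
  have hconn := (hC.affine_preimage (lineMap x y)).ordConnected
  refine Subset.antisymm (fun t ht => ⟨?_, ?_⟩) fun t ⟨hSt, htT⟩ => ?_
  · by_contra! h
    exact ha.2 (hconn.out ht h1 ⟨h, by linarith⟩)
  · by_contra! h
    exact hb.2 (hconn.out h0 ht ⟨by linarith, h⟩)
  rw [mem_preimage, ← hCo.interior_eq]
  rcases lt_or_ge t 1 with ht | ht
  · have hseg : lineMap x y '' Ioo S 1 = openSegment ℝ (lineMap x y S) y := by
      rw [← openSegment_eq_Ioo (by linarith), image_openSegment, lineMap_apply_one]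
    exact hC.openSegment_closure_interior_subset_interior ha.1 (hCo.interior_eq ▸ hy)
      (hseg ▸ mem_image_of_mem _ ⟨hSt, ht⟩)
  · have hseg : lineMap x y '' Ioo 0 T = openSegment ℝ (lineMap x y T) x := by
      rw [← openSegment_eq_Ioo (by linarith), image_openSegment, lineMap_apply_zero,
        openSegment_symm]
    exact hC.openSegment_closure_interior_subset_interior hb.1 (hCo.interior_eq ▸ hx)
      (hseg ▸ mem_image_of_mem _ ⟨by linarith, htT⟩)

section HilbertDist

variable {n : ℕ} {C : Set (EuclideanSpace ℝ (Fin n))} {x y : EuclideanSpace ℝ (Fin n)}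

theorem setOf_add_smul_sub_mem_eq_preimage_lineMap :
    {t : ℝ | x + t • (y - x) ∈ C} = lineMap x y ⁻¹' C := by
  ext t
  simp [lineMap_apply_module', add_comm]

theorem hilbertDist_lineMap_lineMap (hxy : x ≠ y) {S T α β : ℝ}
    (hC : lineMap x y ⁻¹' C = Ioo S T) (hSα : S < α) (hαβ : α < β) (hβT : β < T) :
    hilbertDist C (lineMap x y α) (lineMap x y β) =
      1 / 2 * Real.log ((β - S) / (α - S) * ((T - α) / (T - β))) := by
  have hβα : 0 < β - α := sub_pos.2 hαβ
  have hslice : lineMap (lineMap x y α) (lineMap x y β) ⁻¹' C =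
      Ioo ((S - α) / (β - α)) ((T - α) / (β - α)) := by
    have hcomp : ⇑(lineMap (lineMap x y α) (lineMap x y β)) =
        lineMap x y ∘ (fun t => α + t) ∘ (fun t => t * (β - α)) := by
      ext1 t
      simp only [Function.comp_apply, lineMap_apply_module']
      module
    rw [hcomp, preimage_comp, preimage_comp, hC, preimage_const_add_Ioo,
      preimage_mul_const_Ioo₀ _ _ hβα]
  rw [hilbertDist, if_neg ((lineMap_injective ℝ hxy).ne hαβ.ne),
    setOf_add_smul_sub_mem_eq_preimage_lineMap, hslice,
    csInf_Ioo (by gcongr; linarith), csSup_Ioo (by gcongr; linarith)]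
  congr 2
  field_simp
  ring

theorem inv_sub_sq_eq_of_hilbertDist_eq (hxy : x ≠ y) {S T s : ℝ}
    (hC : lineMap x y ⁻¹' C = Ioo S T) (hS : S < 0) (hT : 1 < T) (hs : s ∈ Ioo 0 1)
    (h : hilbertDist C x (lineMap x y s) = hilbertDist C (lineMap x y s) y) :
    ((s - S)⁻¹ - (T - S)⁻¹) ^ 2 = ((-S)⁻¹ - (T - S)⁻¹) * ((1 - S)⁻¹ - (T - S)⁻¹) := by
  obtain ⟨hs0, hs1⟩ := hs
  have hdx := hilbertDist_lineMap_lineMap hxy hC hS hs0 (by linarith)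
  have hdy := hilbertDist_lineMap_lineMap hxy hC (by linarith) hs1 hT
  rw [lineMap_apply_zero] at hdx
  rw [lineMap_apply_one] at hdy
  rw [hdx, hdy] at h
  have hpos : ∀ {α β : ℝ}, S < α → α < β → β < T →
      0 < (β - S) / (α - S) * ((T - α) / (T - β)) := fun _ _ _ =>
    mul_pos (div_pos (by linarith) (by linarith)) (div_pos (by linarith) (by linarith))
  have hcr := Real.log_injOn_pos (hpos hS hs0 (by linarith)) (hpos (by linarith) hs1 hT)
    (by linarith)
  have : s - S ≠ 0 := by linarith
  have : T - S ≠ 0 := by linarith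
  have : T - s ≠ 0 := by linarith
  have : T - 1 ≠ 0 := by linarith
  have : S ≠ 0 := hS.ne
  have : 1 - S ≠ 0 := by linarith
  field_simp at hcr ⊢
  linear_combination hcr

end HilbertDist

theorem hilbert_midpoint_moves_toward_x_general
    (E K : Set (EuclideanSpace ℝ (Fin 2)))
    (hEop : IsOpen E) (hEcv : Convex ℝ E)
    (hKop : IsOpen K) (hKcv : Convex ℝ K)
    (hEK : E ⊆ K)
    (x y a b a' b' : EuclideanSpace ℝ (Fin 2)) (hx : x ∈ E) (hy : y ∈ E) (hxy : x ≠ y)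
    (ha : a ∈ frontier (closure E)) (hb : b ∈ frontier (closure E))
    (ha' : a' ∈ frontier (closure K)) (hb' : b' ∈ frontier (closure K))
    (hordE : Sbtw ℝ a x y ∧ Sbtw ℝ x y b)
    (hordK : Sbtw ℝ a' x y ∧ Sbtw ℝ x y b')
    (haa' : a' = a) (hbb' : ‖b - x‖ < ‖b' - x‖)
    (mE mK : EuclideanSpace ℝ (Fin 2))
    (hmE : mE ∈ openSegment ℝ x y ∧ hilbertDist E x mE = hilbertDist E mE y)
    (hmK : mK ∈ openSegment ℝ x y ∧ hilbertDist K x mK = hilbertDist K mK y) :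
    ‖mK - x‖ < ‖mE - x‖ ∧ mK ≠ mE := by
  have hfrE := frontier_closure_subset.trans hEop.frontier_eq.subset
  have hfrK := frontier_closure_subset.trans hKop.frontier_eq.subset
  subst haa'
  obtain ⟨S, hS, rfl⟩ := hordE.1.exists_neg_eq_lineMap
  obtain ⟨T₁, hT₁, rfl⟩ := hordE.2.exists_one_lt_eq_lineMap
  obtain ⟨T₂, hT₂, rfl⟩ := hordK.2.exists_one_lt_eq_lineMap
  have hnorm : ∀ t : ℝ, ‖lineMap x y t - x‖ = |t| * ‖y - x‖ := fun t => by
    rw [← dist_eq_norm, dist_lineMap_left, Real.norm_eq_abs, dist_eq_norm']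
  have hyx : 0 < ‖y - x‖ := norm_pos_iff.2 (sub_ne_zero.2 hxy.symm)
  have hT : T₁ < T₂ := by
    rw [hnorm, hnorm, abs_of_pos (by linarith), abs_of_pos (by linarith)] at hbb'
    exact lt_of_mul_lt_mul_right hbb' hyx.le
  have hsliceE := hEcv.preimage_lineMap_eq_Ioo hEop hx hy hS hT₁ (hfrE ha) (hfrE hb)
  have hsliceK :=
    hKcv.preimage_lineMap_eq_Ioo hKop (hEK hx) (hEK hy) hS hT₂ (hfrK ha') (hfrK hb')
  rw [openSegment_eq_image_lineMap] at hmE hmK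
  obtain ⟨⟨sE, hsE, rfl⟩, hdE⟩ := hmE
  obtain ⟨⟨sK, hsK, rfl⟩, hdK⟩ := hmK
  have hs : sK < sE := hilbertMidpoint_param_lt hS hT₁ hT hsE hsK
    (inv_sub_sq_eq_of_hilbertDist_eq hxy hsliceE hS hT₁ hsE hdE)
    (inv_sub_sq_eq_of_hilbertDist_eq hxy hsliceK hS hT₂ hsK hdK)
  refine ⟨?_, (lineMap_injective ℝ hxy).ne hs.ne⟩
  rw [hnorm, hnorm, abs_of_pos hsK.1, abs_of_pos hsE.1]
  exact mul_lt_mul_of_pos_right hs hyx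

/-- Let `E ⊆ K ⊆ ℝ²` be bounded open convex sets and `x ≠ y` in `E`.
Suppose the chord of `E` through `x, y` has endpoints `a, b` (in the order `a,x,y,b`)
and the chord of `K` through `x, y` has endpoints `a', b'` (in the order `a',x,y,b'`)
with `a' = a` but `|b' − x| > |b − x|`. Then the Hilbert midpoint of `x` and `y` in
`K` is strictly closer to `x` than (in particular different from) the Hilbert
midpoint of `x` and `y` in `E`. -/
theorem hilbert_midpoint_moves_toward_x
    (E K : Set (EuclideanSpace ℝ (Fin 2)))
    (hEne : E.Nonempty) (hEbd : Bornology.IsBounded E) (hEop : IsOpen E) (hEcv : Convex ℝ E)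
    (hKne : K.Nonempty) (hKbd : Bornology.IsBounded K) (hKop : IsOpen K) (hKcv : Convex ℝ K)
    (hEK : E ⊆ K)
    (x y a b a' b' : EuclideanSpace ℝ (Fin 2)) (hx : x ∈ E) (hy : y ∈ E) (hxy : x ≠ y)
    (ha : a ∈ frontier (closure E)) (hb : b ∈ frontier (closure E))
    (ha' : a' ∈ frontier (closure K)) (hb' : b' ∈ frontier (closure K))
    (hordE : Sbtw ℝ a x y ∧ Sbtw ℝ x y b)
    (hordK : Sbtw ℝ a' x y ∧ Sbtw ℝ x y b')
    (haa' : a' = a) (hbb' : ‖b - x‖ < ‖b' - x‖)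
    (mE mK : EuclideanSpace ℝ (Fin 2))
    (hmE : mE ∈ openSegment ℝ x y ∧ hilbertDist E x mE = hilbertDist E mE y)
    (hmK : mK ∈ openSegment ℝ x y ∧ hilbertDist K x mK = hilbertDist K mK y) :
    ‖mK - x‖ < ‖mE - x‖ ∧ mK ≠ mE :=
  hilbert_midpoint_moves_toward_x_general E K hEop hEcv hKop hKcv hEK x y a b a' b' hx hy hxy ha hb
    ha' hb' hordE hordK haa' hbb' mE mK hmE hmK
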